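/- arXiv:2505.17851 — 3 statements merged into one kernel-verified Lean document; each statement's English description precedes it below -/
import Mathlib

section
/- Let a < b be real numbers. Let U be a random variable taking values in [a,b], and V a random variable with E[V^2] < ∞ taking values in (-∞,a] ∪ [b,∞) such that P(V < a) + P(V > b) > 0. If E[U] = E[V] and this common expectation lies in the open interval (a,b), then Var(U) < Var(V). -/
/-!
For `X` with mean `m`, expanding the square gives
`Var X = (b - m) * (m - a) + E[(X - a) * (X - b)]`. The expectation is `≤ 0` when `X ∈ [a, b]`
(the Bhatia–Davis inequality) and `> 0` when `X` avoids `(a, b)` and charges the complement of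
`[a, b]`; since `U` and `V` share their mean, `(b - m) * (m - a)` separates their variances.
-/

open MeasureTheory ProbabilityTheory

namespace ProbabilityTheory

variable {Ω : Type*} {mΩ : MeasurableSpace Ω} {μ : Measure Ω}
  {X : Ω → ℝ} {a b : ℝ}

lemma integral_sub_mul_sub [IsProbabilityMeasure μ] (hX : MemLp X 2 μ) :
    ∫ ω, (X ω - a) * (X ω - b) ∂μ = Var[X; μ] - (b - μ[X]) * (μ[X] - a) := by
  have hX1 : Integrable X μ := hX.integrable one_le_two
  have hX2 : Integrable (fun ω ↦ X ω ^ 2) μ := hX.integrable_sq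
  have hquad : Integrable (fun ω ↦ X ω ^ 2 - (a + b) * X ω) μ := hX2.sub (hX1.const_mul _)
  have hexpand : (fun ω ↦ (X ω - a) * (X ω - b)) =
      fun ω ↦ X ω ^ 2 - (a + b) * X ω + a * b := by
    ext ω; ring
  rw [hexpand, integral_add hquad (integrable_const _),
    integral_sub hX2 (hX1.const_mul _), integral_const_mul, integral_const,
    variance_eq_sub hX]
  simp only [Pi.pow_apply, probReal_univ, smul_eq_mul, one_mul]
  ring

lemma integral_sub_mul_sub_pos (hab : a ≤ b) (hX : ∀ᵐ ω ∂μ, X ω ≤ a ∨ b ≤ X ω)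
    (hpos : 0 < μ {ω | X ω < a} + μ {ω | b < X ω})
    (hint : Integrable (fun ω ↦ (X ω - a) * (X ω - b)) μ) :
    0 < ∫ ω, (X ω - a) * (X ω - b) ∂μ := by
  have hnonneg : 0 ≤ᵐ[μ] fun ω ↦ (X ω - a) * (X ω - b) := by
    filter_upwards [hX] with ω hω
    rcases hω with h | h
    · exact mul_nonneg_of_nonpos_of_nonpos (sub_nonpos.2 h) (sub_nonpos.2 (h.trans hab))
    · exact mul_nonneg (sub_nonneg.2 (hab.trans h)) (sub_nonneg.2 h)
  have hbelow : {ω | X ω < a} ⊆ Function.support fun ω ↦ (X ω - a) * (X ω - b) :=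
    fun ω h ↦ (mul_pos_of_neg_of_neg (sub_neg.2 h) (sub_neg.2 (h.trans_le hab))).ne'
  have habove : {ω | b < X ω} ⊆ Function.support fun ω ↦ (X ω - a) * (X ω - b) :=
    fun ω h ↦ (mul_pos (sub_pos.2 (hab.trans_lt h)) (sub_pos.2 h)).ne'
  rw [integral_pos_iff_support_of_nonneg_ae hnonneg hint]
  rcases add_pos_iff.1 hpos with h | h
  · exact h.trans_le (measure_mono hbelow)
  · exact h.trans_le (measure_mono habove)

lemma sub_mul_sub_lt_variance [IsProbabilityMeasure μ] (hab : a ≤ b)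
    (hX : ∀ᵐ ω ∂μ, X ω ≤ a ∨ b ≤ X ω)
    (hpos : 0 < μ {ω | X ω < a} + μ {ω | b < X ω}) (hX2 : MemLp X 2 μ) :
    (b - μ[X]) * (μ[X] - a) < Var[X; μ] := by
  have hint : Integrable (fun ω ↦ (X ω - a) * (X ω - b)) μ :=
    (hX2.sub (memLp_const a)).integrable_mul (hX2.sub (memLp_const b))
  have hgap := integral_sub_mul_sub_pos hab hX hpos hint
  rw [integral_sub_mul_sub hX2] at hgap
  linarith

end ProbabilityTheory

theorem stmt_0_general {Ω : Type*} [MeasureSpace Ω] [IsProbabilityMeasure (ℙ : Measure Ω)]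
    (a b : ℝ) (hab : a < b) (U V : Ω → ℝ)
    (hUmeas : Measurable U)
    (hU : ∀ᵐ ω ∂(ℙ : Measure Ω), U ω ∈ Set.Icc a b)
    (hV : ∀ᵐ ω ∂(ℙ : Measure Ω), V ω ≤ a ∨ b ≤ V ω)
    (hV2 : MemLp V 2 (ℙ : Measure Ω))
    (hpos : 0 < ℙ {ω | V ω < a} + ℙ {ω | b < V ω})
    (hmean : ∫ ω, U ω = ∫ ω, V ω) :
    variance U ℙ < variance V ℙ :=
  calc variance U ℙ ≤ (b - ∫ ω, U ω) * ((∫ ω, U ω) - a) :=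
        variance_le_sub_mul_sub hU hUmeas.aemeasurable
    _ = (b - ∫ ω, V ω) * ((∫ ω, V ω) - a) := by rw [hmean]
    _ < variance V ℙ := sub_mul_sub_lt_variance hab.le hV hpos hV2

/-- Lemma (compare variance): if `U` takes values in `[a,b]`, `V` takes values in
`(-∞,a] ∪ [b,∞)` with positive probability of being strictly outside `[a,b]`,
`V` is square-integrable, and `E[U] = E[V] ∈ (a,b)`, then `Var(U) < Var(V)`. -/
theorem stmt_0 {Ω : Type*} [MeasureSpace Ω] [IsProbabilityMeasure (ℙ : Measure Ω)]
    (a b : ℝ) (hab : a < b) (U V : Ω → ℝ)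
    (hUmeas : Measurable U) (hVmeas : Measurable V)
    (hU : ∀ᵐ ω ∂(ℙ : Measure Ω), U ω ∈ Set.Icc a b)
    (hV : ∀ᵐ ω ∂(ℙ : Measure Ω), V ω ≤ a ∨ b ≤ V ω)
    (hV2 : MemLp V 2 (ℙ : Measure Ω))
    (hpos : 0 < ℙ {ω | V ω < a} + ℙ {ω | b < V ω})
    (hmean : ∫ ω, U ω = ∫ ω, V ω)
    (hmem : (∫ ω, U ω) ∈ Set.Ioo a b) :
    variance U ℙ < variance V ℙ :=
  stmt_0_general a b hab U V hUmeas hU hV hV2 hpos hmean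
end

section
/- Under the total-variation continuity assumption on θ ↦ μ_θ over a compact parameter set Θ, the set P of all power functions is an equicontinuous, uniformly bounded subset of C(Θ); moreover P is closed under uniform limits, hence P is compact in C(Θ) with the supremum norm. -/
/-!
Each power function `p = ∫ δ f_θ dμ` satisfies `|p θ - p θ'| ≤ ∫ |f_θ - f_θ'| dμ`, so total-variation
continuity makes the power functions equicontinuous, and `|p θ| ≤ ∫ |f_θ| dμ` bounds them
pointwise. By Arzelà–Ascoli it remains to see that they are closed under pointwise limits, i.e.
that tests `δ_i : Y → [0, 1]` have weak-* limit points. After replacing `μ` by an equivalent finite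
measure `ν`, the tests lie in a ball of `L²(ν)`, which is weakly compact by Banach–Alaoglu; the
integral of a weak limit over any set `A` lies in `[0, ν A]`, so it is again a test, and
convergence against bounded functions extends to all of `L¹` by truncation.
-/

open MeasureTheory Filter Topology
open scoped ENNReal

lemma exists_tendsto_inner_of_norm_le {E : Type*} [NormedAddCommGroup E] [InnerProductSpace ℝ E]
    [CompleteSpace E] {ι : Type*} (U : Ultrafilter ι) {e : ι → E} {R : ℝ}
    (he : ∀ i, ‖e i‖ ≤ R) :
    ∃ x : E, ∀ g : E, Tendsto (fun i => inner ℝ (e i) g) U (𝓝 (inner ℝ x g)) := by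
  let Λ : ι → WeakDual ℝ E := fun i => StrongDual.toWeakDual (InnerProductSpace.toDual ℝ E (e i))
  have hΛ : ∀ i, Λ i ∈ WeakDual.toStrongDual ⁻¹' Metric.closedBall 0 R := fun i => by
    simpa [Λ] using he i
  obtain ⟨Λ₀, -, hΛ₀⟩ := (WeakDual.isCompact_closedBall (0 : StrongDual ℝ E) R).ultrafilter_le_nhds
    (U.map Λ) (le_principal_iff.2 (mem_map.2 (univ_mem' hΛ)))
  refine ⟨(InnerProductSpace.toDual ℝ E).symm (WeakDual.toStrongDual Λ₀), fun g => ?_⟩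
  rw [InnerProductSpace.toDual_symm_apply]
  exact ((WeakDual.eval_continuous g).tendsto Λ₀).comp hΛ₀

section Tests

variable {Y : Type*} [MeasurableSpace Y] {μ : Measure Y}

lemma norm_le_one_of_mem_Icc {x : ℝ} (hx : x ∈ Set.Icc (0 : ℝ) 1) : ‖x‖ ≤ 1 := by
  rw [Real.norm_of_nonneg hx.1]
  exact hx.2

lemma abs_sub_clamp_le (x : ℝ) {M : ℝ} (hM : 0 ≤ M) : |x - max (-M) (min x M)| ≤ |x| := by
  rw [abs_le]
  constructor <;> rcases abs_cases x with hx | hx <;>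
    rcases max_cases (-M) (min x M) with h | h <;>
    rcases min_cases x M with h' | h' <;> linarith

lemma abs_clamp_le (x : ℝ) {M : ℝ} (hM : 0 ≤ M) : |max (-M) (min x M)| ≤ |x| := by
  rw [abs_le]
  constructor <;> rcases abs_cases x with hx | hx <;>
    rcases max_cases (-M) (min x M) with h | h <;>
    rcases min_cases x M with h' | h' <;> linarith

lemma norm_clamp_le (x : ℝ) {M : ℝ} (hM : 0 ≤ M) : ‖max (-M) (min x M)‖ ≤ M := by
  rw [Real.norm_eq_abs, abs_le]
  exact ⟨le_max_left _ _, max_le (by linarith) (min_le_right _ _)⟩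

lemma tendsto_integral_abs_sub_clamp {g : Y → ℝ} (hg : Integrable g μ) :
    Tendsto (fun M : ℕ => ∫ y, |g y - max (-(M : ℝ)) (min (g y) M)| ∂μ) atTop (𝓝 0) := by
  have := tendsto_integral_of_dominated_convergence (fun y => |g y|) (f := fun _ => 0)
    (fun M : ℕ => ((hg.aestronglyMeasurable.sub
      (aestronglyMeasurable_const.sup
        (hg.aestronglyMeasurable.inf aestronglyMeasurable_const))).norm)) hg.abs
    (fun M => Eventually.of_forall fun y => by
      simpa using abs_sub_clamp_le (g y) M.cast_nonneg)
    (Eventually.of_forall fun y => tendsto_atTop_of_eventually_const (i₀ := ⌈|g y|⌉₊)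
      fun M hM => by
        have := (abs_le.1 ((Nat.le_ceil _).trans (Nat.cast_le.2 hM)))
        simp [min_eq_left this.2, max_eq_right this.1])
  simpa using this

lemma abs_integral_mul_sub_integral_mul_le {a g h : Y → ℝ} (ha : AEStronglyMeasurable a μ)
    (ha1 : ∀ y, ‖a y‖ ≤ 1) (hg : Integrable g μ) (hh : Integrable h μ) :
    |∫ y, a y * g y ∂μ - ∫ y, a y * h y ∂μ| ≤ ∫ y, |g y - h y| ∂μ := by
  have hag := hg.bdd_mul ha (Eventually.of_forall ha1)
  have hah := hh.bdd_mul ha (Eventually.of_forall ha1)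
  rw [← integral_sub hag hah]
  refine abs_integral_le_integral_abs.trans
    (integral_mono (hag.sub hah).abs (hg.sub hh).abs fun y => ?_)
  rw [← mul_sub, abs_mul, ← Real.norm_eq_abs (a y)]
  exact mul_le_of_le_one_left (abs_nonneg _) (ha1 y)

lemma tendsto_integral_mul_of_forall_memLp_top {ι : Type*} {l : Filter ι} {a : ι → Y → ℝ}
    {b : Y → ℝ} (ha : ∀ i, AEStronglyMeasurable (a i) μ) (ha1 : ∀ i y, ‖a i y‖ ≤ 1)
    (hb : AEStronglyMeasurable b μ) (hb1 : ∀ y, ‖b y‖ ≤ 1)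
    (hlim : ∀ g, Integrable g μ → MemLp g ∞ μ →
      Tendsto (fun i => ∫ y, a i y * g y ∂μ) l (𝓝 (∫ y, b y * g y ∂μ)))
    {g : Y → ℝ} (hg : Integrable g μ) :
    Tendsto (fun i => ∫ y, a i y * g y ∂μ) l (𝓝 (∫ y, b y * g y ∂μ)) := by
  set gM : ℕ → Y → ℝ := fun M y => max (-(M : ℝ)) (min (g y) M)
  have hgM_meas : ∀ M, AEStronglyMeasurable (gM M) μ := fun M =>
    aestronglyMeasurable_const.sup (hg.aestronglyMeasurable.inf aestronglyMeasurable_const)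
  have hgM_int : ∀ M, Integrable (gM M) μ := fun M =>
    hg.mono (hgM_meas M) (Eventually.of_forall fun y => abs_clamp_le (g y) M.cast_nonneg)
  have hgM_top : ∀ M, MemLp (gM M) ∞ μ := fun M =>
    memLp_top_of_bound (hgM_meas M) M (Eventually.of_forall fun y =>
      norm_clamp_le (g y) M.cast_nonneg)
  have hgM_lim := tendsto_integral_abs_sub_clamp hg
  refine TendstoUniformly.tendsto_of_eventually_tendsto (p := atTop)
    (F := fun M i => ∫ y, a i y * gM M y ∂μ) ?_
    (Eventually.of_forall fun M => hlim _ (hgM_int M) (hgM_top M))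
    (tendsto_iff_dist_tendsto_zero.2 (squeeze_zero (fun _ => dist_nonneg) (fun M => ?_) hgM_lim))
  · rw [Metric.tendstoUniformly_iff]
    intro ε hε
    filter_upwards [hgM_lim.eventually (gt_mem_nhds hε)] with M hM i
    exact (abs_integral_mul_sub_integral_mul_le (ha i) (ha1 i) hg (hgM_int M)).trans_lt hM
  · rw [Real.dist_eq, abs_sub_comm]
    exact abs_integral_mul_sub_integral_mul_le hb hb1 hg (hgM_int M)

lemma L2.inner_toLp_eq_integral_mul {x : Lp ℝ 2 μ} {a b : Y → ℝ} (hxa : x =ᵐ[μ] a)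
    (hb : MemLp b 2 μ) : inner ℝ x (hb.toLp b) = ∫ y, a y * b y ∂μ := by
  rw [L2.inner_def]
  refine integral_congr_ae ?_
  filter_upwards [hxa, hb.coeFn_toLp] with y h1 h2
  simp [h1, h2, mul_comm]

lemma ae_mem_Icc_of_forall_setIntegral_mem_Icc [IsFiniteMeasure μ] {h : Y → ℝ}
    (hh : Integrable h μ) (hA : ∀ A, MeasurableSet A → ∫ y in A, h y ∂μ ∈ Set.Icc 0 (μ.real A)) :
    ∀ᵐ y ∂μ, h y ∈ Set.Icc (0 : ℝ) 1 := by
  have h0 : 0 ≤ᵐ[μ] h := ae_nonneg_of_forall_setIntegral_nonneg hh fun A hA' _ => (hA A hA').1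
  have h1 : h ≤ᵐ[μ] fun _ => 1 := ae_le_of_forall_setIntegral_le hh (integrable_const 1)
    fun A hA' _ => by simpa using (hA A hA').2
  filter_upwards [h0, h1] with y hy0 hy1 using ⟨hy0, hy1⟩

lemma exists_measurable_mem_Icc_ae_eq {h : Y → ℝ} (hh : AEStronglyMeasurable h μ)
    (h01 : ∀ᵐ y ∂μ, h y ∈ Set.Icc (0 : ℝ) 1) :
    ∃ δ : Y → ℝ, Measurable δ ∧ (∀ y, δ y ∈ Set.Icc (0 : ℝ) 1) ∧ δ =ᵐ[μ] h := by
  refine ⟨fun y => Set.projIcc 0 1 zero_le_one (hh.mk h y),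
    (continuous_subtype_val.comp (continuous_projIcc (h := zero_le_one))).measurable.comp
      hh.stronglyMeasurable_mk.measurable, fun y => Subtype.prop _, ?_⟩
  filter_upwards [h01, hh.ae_eq_mk] with y hy hmk
  rw [← hmk, Set.projIcc_of_mem _ hy]

lemma ae_mem_Icc_of_tendsto_inner [IsFiniteMeasure μ] {ι : Type*} {l : Filter ι} [l.NeBot]
    {d : ι → Y → ℝ} (hd : ∀ i, MemLp (d i) 2 μ) (hd01 : ∀ i y, d i y ∈ Set.Icc (0 : ℝ) 1)
    {x : Lp ℝ 2 μ}
    (hx : ∀ g, Tendsto (fun i => inner ℝ ((hd i).toLp (d i)) g) l (𝓝 (inner ℝ x g))) :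
    ∀ᵐ y ∂μ, x y ∈ Set.Icc (0 : ℝ) 1 := by
  refine ae_mem_Icc_of_forall_setIntegral_mem_Icc ((Lp.memLp x).integrable one_le_two)
    fun A hA => ?_
  set χ := indicatorConstLp 2 hA (measure_ne_top μ A) (1 : ℝ)
  have hχ : ∀ z : Lp ℝ 2 μ, inner ℝ z χ = ∫ y in A, z y ∂μ := fun z => by
    rw [real_inner_comm, L2.inner_indicatorConstLp_one]
  have hlim := hx χ
  simp only [hχ] at hlim
  refine isClosed_Icc.mem_of_tendsto hlim (Eventually.of_forall fun i => ?_)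
  rw [setIntegral_congr_ae hA ((hd i).coeFn_toLp.mono fun y hy _ => hy)]
  refine ⟨setIntegral_nonneg hA fun y _ => (hd01 i y).1, ?_⟩
  calc ∫ y in A, d i y ∂μ ≤ ∫ _ in A, (1 : ℝ) ∂μ :=
        setIntegral_mono ((hd i).integrable one_le_two).integrableOn
          (integrableOn_const (measure_ne_top μ A)) fun y => (hd01 i y).2
    _ = μ.real A := by simp

lemma exists_tendsto_integral_mul_of_isFiniteMeasure [IsFiniteMeasure μ] {ι : Type*}
    (U : Ultrafilter ι) {d : ι → Y → ℝ} (hd : ∀ i, Measurable (d i))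
    (hd01 : ∀ i y, d i y ∈ Set.Icc (0 : ℝ) 1) :
    ∃ δ : Y → ℝ, Measurable δ ∧ (∀ y, δ y ∈ Set.Icc (0 : ℝ) 1) ∧ ∀ g, Integrable g μ →
      Tendsto (fun i => ∫ y, d i y * g y ∂μ) U (𝓝 (∫ y, δ y * g y ∂μ)) := by
  have hd1 : ∀ i y, ‖d i y‖ ≤ 1 := fun i y => norm_le_one_of_mem_Icc (hd01 i y)
  have hdL2 : ∀ i, MemLp (d i) 2 μ := fun i =>
    MemLp.of_bound (hd i).aestronglyMeasurable 1 (Eventually.of_forall (hd1 i))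
  obtain ⟨x, hx⟩ := exists_tendsto_inner_of_norm_le U (e := fun i => (hdL2 i).toLp (d i))
    fun i => Lp.norm_le_of_ae_bound zero_le_one <| by
      filter_upwards [(hdL2 i).coeFn_toLp] with y hy
      rw [hy]
      exact hd1 i y
  obtain ⟨δ, hδ, hδ01, hδx⟩ := exists_measurable_mem_Icc_ae_eq (Lp.aestronglyMeasurable x)
    (ae_mem_Icc_of_tendsto_inner hdL2 hd01 hx)
  refine ⟨δ, hδ, hδ01, fun g hg => tendsto_integral_mul_of_forall_memLp_top
    (fun i => (hd i).aestronglyMeasurable) hd1 hδ.aestronglyMeasurable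
    (fun y => norm_le_one_of_mem_Icc (hδ01 y)) (fun g _ hg_top => ?_) hg⟩
  have hg2 : MemLp g 2 μ := hg_top.mono_exponent le_top
  simpa only [L2.inner_toLp_eq_integral_mul (hdL2 _).coeFn_toLp hg2,
    L2.inner_toLp_eq_integral_mul hδx.symm hg2] using hx (hg2.toLp g)

lemma exists_tendsto_integral_mul [SigmaFinite μ] {ι : Type*}
    (U : Ultrafilter ι) {d : ι → Y → ℝ} (hd : ∀ i, Measurable (d i))
    (hd01 : ∀ i y, d i y ∈ Set.Icc (0 : ℝ) 1) :
    ∃ δ : Y → ℝ, Measurable δ ∧ (∀ y, δ y ∈ Set.Icc (0 : ℝ) 1) ∧ ∀ g, Integrable g μ →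
      Tendsto (fun i => ∫ y, d i y * g y ∂μ) U (𝓝 (∫ y, δ y * g y ∂μ)) := by
  obtain ⟨w, hw_pos, hw, hw_lt⟩ := exists_pos_lintegral_lt_of_sigmaFinite μ one_ne_zero
  set ν := μ.withDensity fun y => (w y : ℝ≥0∞)
  have : IsFiniteMeasure ν := isFiniteMeasure_withDensity (hw_lt.trans ENNReal.one_lt_top).ne
  obtain ⟨δ, hδ, hδ01, hlim⟩ := exists_tendsto_integral_mul_of_isFiniteMeasure (μ := ν) U hd hd01
  refine ⟨δ, hδ, hδ01, fun g hg => ?_⟩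
  -- against `ν = w • μ` the test function `g` becomes `g / w`
  have hw_smul : ∀ (a : Y → ℝ) y, w y • (a y * ((w y : ℝ)⁻¹ * g y)) = a y * g y := fun a y => by
    rw [NNReal.smul_def, smul_eq_mul, mul_left_comm,
      mul_inv_cancel_left₀ (NNReal.coe_ne_zero.2 (hw_pos y).ne')]
  have hν : ∀ a : Y → ℝ, ∫ y, a y * ((w y : ℝ)⁻¹ * g y) ∂ν = ∫ y, a y * g y ∂μ := fun a => by
    simp only [ν, integral_withDensity_eq_integral_smul hw, hw_smul]
  have hgν : Integrable (fun y => (w y : ℝ)⁻¹ * g y) ν := by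
    rw [integrable_withDensity_iff_integrable_smul hw]
    refine hg.congr (Eventually.of_forall fun y => ?_)
    simpa using (hw_smul 1 y).symm
  simpa only [hν] using hlim _ hgν

end Tests

section PowerFunctions

variable {Θ Y : Type*} [MeasurableSpace Y] (μ : Measure Y) (f : Θ → Y → ℝ)

def powerFunctions : Set (Θ → ℝ) :=
  {p | ∃ δ : Y → ℝ, Measurable δ ∧ (∀ y, δ y ∈ Set.Icc (0 : ℝ) 1) ∧
    ∀ θ, p θ = ∫ y, δ y * f θ y ∂μ}

variable {μ f}

lemma powerFunctions_subset_pi (hf : ∀ θ, Integrable (f θ) μ) :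
    powerFunctions μ f ⊆ Set.univ.pi fun θ => Metric.closedBall 0 (∫ y, |f θ y| ∂μ) := by
  rintro p ⟨δ, -, hδ01, hp⟩ θ -
  rw [mem_closedBall_zero_iff, hp θ]
  refine norm_integral_le_of_norm_le (hf θ).abs (Eventually.of_forall fun y => ?_)
  rw [norm_mul, Real.norm_eq_abs (f θ y)]
  exact mul_le_of_le_one_left (abs_nonneg _) (norm_le_one_of_mem_Icc (hδ01 y))

lemma isClosed_powerFunctions [SigmaFinite μ] (hf : ∀ θ, Integrable (f θ) μ) :
    IsClosed (powerFunctions μ f) := by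
  refine isClosed_iff_ultrafilter.2 fun q U hUq hPU => ?_
  have htest : ∀ p, ∃ δ : Y → ℝ, Measurable δ ∧ (∀ y, δ y ∈ Set.Icc (0 : ℝ) 1) ∧
      (p ∈ powerFunctions μ f → ∀ θ, p θ = ∫ y, δ y * f θ y ∂μ) := by
    intro p
    by_cases hp : p ∈ powerFunctions μ f
    · obtain ⟨δ, hδ, hδ01, hpδ⟩ := hp
      exact ⟨δ, hδ, hδ01, fun _ => hpδ⟩
    · exact ⟨0, measurable_const, fun _ => ⟨le_rfl, zero_le_one⟩, fun h => absurd h hp⟩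
  choose d hd hd01 hdp using htest
  obtain ⟨δ, hδ, hδ01, hlim⟩ := exists_tendsto_integral_mul (μ := μ) U hd hd01
  refine ⟨δ, hδ, hδ01, fun θ => tendsto_nhds_unique ((continuous_apply θ).tendsto q |>.comp hUq)
    ((hlim _ (hf θ)).congr' ?_)⟩
  filter_upwards [hPU] with p hp using (hdp p hp θ).symm

lemma isCompact_powerFunctions [SigmaFinite μ] (hf : ∀ θ, Integrable (f θ) μ) :
    IsCompact (powerFunctions μ f) :=
  (isCompact_univ_pi fun _ => isCompact_closedBall _ _).of_isClosed_subset
    (isClosed_powerFunctions hf) (powerFunctions_subset_pi hf)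

lemma abs_sub_le_of_mem_powerFunctions (hf : ∀ θ, Integrable (f θ) μ) {p : Θ → ℝ}
    (hp : p ∈ powerFunctions μ f) (θ θ' : Θ) : |p θ - p θ'| ≤ ∫ y, |f θ y - f θ' y| ∂μ := by
  obtain ⟨δ, hδ, hδ01, hpδ⟩ := hp
  rw [hpδ, hpδ]
  exact abs_integral_mul_sub_integral_mul_le hδ.aestronglyMeasurable
    (fun y => norm_le_one_of_mem_Icc (hδ01 y)) (hf θ) (hf θ')

variable [TopologicalSpace Θ]

lemma equicontinuous_of_forall_mem_powerFunctions (hf : ∀ θ, Integrable (f θ) μ)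
    (hTV : ∀ θ₀, Tendsto (fun θ => ∫ y, |f θ y - f θ₀ y| ∂μ) (𝓝 θ₀) (𝓝 0))
    {ι : Type*} {F : ι → Θ → ℝ} (hF : ∀ i, F i ∈ powerFunctions μ f) : Equicontinuous F := by
  intro θ₀
  rw [Metric.equicontinuousAt_iff_right]
  intro ε hε
  filter_upwards [(hTV θ₀).eventually (gt_mem_nhds hε)] with θ hθ i
  rw [Real.dist_eq, abs_sub_comm]
  exact (abs_sub_le_of_mem_powerFunctions hf (hF i) θ θ₀).trans_lt hθ

lemma continuous_of_mem_powerFunctions (hf : ∀ θ, Integrable (f θ) μ)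
    (hTV : ∀ θ₀, Tendsto (fun θ => ∫ y, |f θ y - f θ₀ y| ∂μ) (𝓝 θ₀) (𝓝 0))
    {p : Θ → ℝ} (hp : p ∈ powerFunctions μ f) : Continuous p :=
  (equicontinuous_of_forall_mem_powerFunctions hf hTV (F := fun _ : Unit => p)
    fun _ => hp).continuous ()

end PowerFunctions

theorem stmt_5_general {Θ : Type*} [MetricSpace Θ] [CompactSpace Θ]
    {Y : Type*} [MeasurableSpace Y] (μ : Measure Y) [SigmaFinite μ]
    (f : Θ → Y → ℝ)
    (hf_int : ∀ θ, Integrable (f θ) μ)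
    (hTV : ∀ (θn : ℕ → Θ) (θ : Θ), Tendsto θn atTop (nhds θ) →
      Tendsto (fun n => ∫ y, |f (θn n) y - f θ y| ∂μ) atTop (nhds 0)) :
    IsCompact {p : C(Θ, ℝ) | ∃ δ : Y → ℝ, Measurable δ ∧
      (∀ y, δ y ∈ Set.Icc (0:ℝ) 1) ∧ ∀ θ, p θ = ∫ y, δ y * f θ y ∂μ} := by
  have hTV_nhds : ∀ θ₀, Tendsto (fun θ => ∫ y, |f θ y - f θ₀ y| ∂μ) (𝓝 θ₀) (𝓝 0) :=
    fun θ₀ => tendsto_nhds_iff_seq_tendsto.2 fun θn h => hTV θn θ₀ h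
  refine ArzelaAscoli.isCompact_of_equicontinuous _ ?_
    (equicontinuous_of_forall_mem_powerFunctions hf_int hTV_nhds fun p => p.2)
  convert isCompact_powerFunctions (μ := μ) hf_int
  ext p
  exact ⟨fun ⟨p, hp, hpp⟩ => hpp ▸ hp,
    fun hp => ⟨⟨p, continuous_of_mem_powerFunctions hf_int hTV_nhds hp⟩, hp, rfl⟩⟩

/-- Under total-variation continuity of `θ ↦ μ_θ` over a compact `Θ`, the set of all
power functions, viewed inside `C(Θ, ℝ)`, is compact. -/
theorem stmt_5 {Θ : Type*} [MetricSpace Θ] [CompactSpace Θ]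
    {Y : Type*} [MeasurableSpace Y] (μ : Measure Y) [SigmaFinite μ]
    (f : Θ → Y → ℝ)
    (hf_nonneg : ∀ θ y, 0 ≤ f θ y)
    (hf_int : ∀ θ, Integrable (f θ) μ)
    (hTV : ∀ (θn : ℕ → Θ) (θ : Θ), Tendsto θn atTop (nhds θ) →
      Tendsto (fun n => ∫ y, |f (θn n) y - f θ y| ∂μ) atTop (nhds 0)) :
    IsCompact {p : C(Θ, ℝ) | ∃ δ : Y → ℝ, Measurable δ ∧
      (∀ y, δ y ∈ Set.Icc (0:ℝ) 1) ∧ ∀ θ, p θ = ∫ y, δ y * f θ y ∂μ} :=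
  stmt_5_general μ f hf_int hTV
end

section
/- Let U and V be bounded random variables, U supported on [−K,a) ∪ (b,K] and V supported on [a,b], where −K ≤ a < b ≤ K. Define ψ(x) = log E[e^{xU}] − log E[e^{xV}]. Then ψ' has at most one real root; in particular ψ is either monotone on ℝ or has exactly one critical point, at which ψ attains a strict local minimum. -/
/-!
At a point `t`, `ψ'(t)` and `ψ''(t)` are the differences of the means and of the variances of the
exponentially tilted laws of `U` and `V`. If the means agree, with common value `m`, then the
tilted `V` still lives on `[a, b]`, so its variance is at most `(b - m) (m - a)` (Bhatia–Davis);
the tilted `U` lives outside `(a, b)`, so `E[(U - a)(U - b)] > 0`, i.e. its variance exceeds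
`(b - m) (m - a)`. Hence `ψ'' > 0` at every zero of `ψ'`, and a continuous function which crosses
zero only upwards has at most one zero.
-/

open MeasureTheory ProbabilityTheory Filter Set Topology

lemma subsingleton_setOf_eq_zero_of_deriv_pos {g : ℝ → ℝ} (hg : Continuous g)
    (hderiv : ∀ x, g x = 0 → 0 < deriv g x) : {x | g x = 0}.Subsingleton := by
  have sign_eq {x} (hx : g x = 0) : ∀ᶠ t in 𝓝 x, SignType.sign (g t) = SignType.sign (t - x) :=
    eventually_nhdsWithin_sign_eq_of_deriv_pos (hderiv x hx) hx
  -- real induction on `{t | 0 ≤ g t}`, which at a zero of `g` extends to the right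
  have nonneg_right {x} (hx : g x = 0) {y} (hxy : x ≤ y) : 0 ≤ g y := by
    refine (isClosed_le continuous_const hg).inter isClosed_Icc
      |>.Icc_subset_of_forall_mem_nhdsWithin (a := x) hx.ge ?_ ⟨hxy, le_rfl⟩
    rintro t ⟨ht, -⟩
    rcases (show 0 ≤ g t from ht).eq_or_lt with ht | ht
    · filter_upwards [nhdsWithin_le_nhds (sign_eq ht.symm), self_mem_nhdsWithin]
        with s hs (hts : t < s)
      rw [sign_pos (sub_pos.2 hts), sign_eq_one_iff] at hs
      exact hs.le
    · exact nhdsWithin_le_nhds ((hg.tendsto t).eventually (eventually_ge_nhds ht))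
  intro x₁ hx₁ x₂ hx₂
  by_contra hne
  wlog hlt : x₁ < x₂ generalizing x₁ x₂
  · exact this hx₂ hx₁ (Ne.symm hne) ((le_of_not_gt hlt).lt_of_ne (Ne.symm hne))
  obtain ⟨t, hsign, hx₁t, htx₂⟩ : ∃ t, SignType.sign (g t) = SignType.sign (t - x₂) ∧
      x₁ < t ∧ t < x₂ :=
    (((sign_eq hx₂).filter_mono nhdsWithin_le_nhds).and
      (((eventually_gt_nhds hlt).filter_mono nhdsWithin_le_nhds).and
        (self_mem_nhdsWithin : ∀ᶠ t in 𝓝[<] x₂, t < x₂))).exists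
  rw [sign_neg (sub_neg.2 htx₂), sign_eq_neg_one_iff] at hsign
  exact hsign.not_ge (nonneg_right hx₁ hx₁t.le)

section
variable {Ω : Type*} {mΩ : MeasurableSpace Ω} {μ : Measure Ω} {X : Ω → ℝ} {a b : ℝ}

lemma sub_mul_sub_lt_variance [IsProbabilityMeasure μ] (hab : a ≤ b) (hX : MemLp X 2 μ)
    (hout : ∀ᵐ ω ∂μ, X ω < a ∨ b < X ω) :
    (b - μ[X]) * (μ[X] - a) < Var[X; μ] := by
  have hX₁ : Integrable X μ := hX.integrable one_le_two
  have hpos : ∀ᵐ ω ∂μ, 0 < (X ω - a) * (X ω - b) := by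
    filter_upwards [hout] with ω hω
    rcases hω with h | h
    · exact mul_pos_of_neg_of_neg (by linarith) (by linarith)
    · exact mul_pos (by linarith) (by linarith)
  have hexpand : (fun ω => (X ω - a) * (X ω - b)) = fun ω => X ω ^ 2 - (a + b) * X ω + a * b := by
    ext ω; ring
  have hint₂ : Integrable (fun ω => X ω ^ 2 - (a + b) * X ω) μ :=
    hX.integrable_sq.sub (hX₁.const_mul _)
  have hint : Integrable (fun ω => (X ω - a) * (X ω - b)) μ :=
    hexpand ▸ hint₂.add (integrable_const _)
  have hI : 0 < ∫ ω, (X ω - a) * (X ω - b) ∂μ := by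
    rw [integral_pos_iff_support_of_nonneg_ae (hpos.mono fun _ h => h.le) hint, pos_iff_ne_zero, Ne, Measure.measure_support_eq_zero_iff μ]
    intro hzero
    obtain ⟨ω, hω, hω₀⟩ := (hpos.and hzero).exists
    exact hω.ne' hω₀
  have hexp : ∫ ω, (X ω - a) * (X ω - b) ∂μ = μ[X ^ 2] - (a + b) * μ[X] + a * b := by
    rw [hexpand, integral_add hint₂ (integrable_const _),
      integral_sub hX.integrable_sq (hX₁.const_mul _), integral_const_mul]
    simp
  rw [variance_eq_sub hX]
  linarith

lemma interior_integrableExpSet_eq_univ [IsFiniteMeasure μ] (hX : AEMeasurable X μ)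
    (hb : ∀ᵐ ω ∂μ, X ω ∈ Icc a b) : interior (integrableExpSet X μ) = univ := by
  have : integrableExpSet X μ = univ :=
    eq_univ_of_forall fun _ => integrable_exp_mul_of_mem_Icc hX hb
  rw [this, interior_univ]

end

lemma iteratedDeriv_two_cgf_lt_of_deriv_cgf_eq {Ω Ω' : Type*} {mΩ : MeasurableSpace Ω}
    {mΩ' : MeasurableSpace Ω'} {μ : Measure Ω} {ν : Measure Ω'} [IsProbabilityMeasure μ]
    [IsProbabilityMeasure ν] {U : Ω → ℝ} {V : Ω' → ℝ} {a b t : ℝ} (hab : a ≤ b)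
    (hU : ∀ᵐ ω ∂μ, U ω < a ∨ b < U ω) (hV : ∀ᵐ ω ∂ν, V ω ∈ Icc a b)
    (htU : t ∈ interior (integrableExpSet U μ)) (htV : t ∈ interior (integrableExpSet V ν))
    (heq : deriv (cgf U μ) t = deriv (cgf V ν) t) :
    iteratedDeriv 2 (cgf V ν) t < iteratedDeriv 2 (cgf U μ) t := by
  have := isProbabilityMeasure_tilted (integrable_of_mem_integrableExpSet (interior_subset htU))
  have := isProbabilityMeasure_tilted (integrable_of_mem_integrableExpSet (interior_subset htV))
  rw [← variance_tilted_mul htU, ← variance_tilted_mul htV]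
  calc Var[V; ν.tilted (t * V ·)]
      ≤ (b - (ν.tilted (t * V ·))[V]) * ((ν.tilted (t * V ·))[V] - a) :=
        variance_le_sub_mul_sub ((tilted_absolutelyContinuous _ _).ae_le hV)
          (memLp_tilted_mul htV 1).aestronglyMeasurable.aemeasurable
    _ = (b - (μ.tilted (t * U ·))[U]) * ((μ.tilted (t * U ·))[U] - a) := by
        rw [integral_tilted_mul_self htU, integral_tilted_mul_self htV, heq]
    _ < Var[U; μ.tilted (t * U ·)] :=
        sub_mul_sub_lt_variance hab (memLp_tilted_mul htU 2)
          ((tilted_absolutelyContinuous _ _).ae_le hU)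

theorem stmt_16_general {Ω : Type*} [MeasureSpace Ω] [IsProbabilityMeasure (ℙ : Measure Ω)]
    (K a b : ℝ) (hab : a < b)
    (U V : Ω → ℝ) (hUmeas : Measurable U) (hVmeas : Measurable V)
    (hU : ∀ᵐ ω ∂(ℙ : Measure Ω),
      U ω ∈ Set.Icc (-K) K ∧ (U ω < a ∨ b < U ω))
    (hV : ∀ᵐ ω ∂(ℙ : Measure Ω), V ω ∈ Set.Icc a b) :
    {x : ℝ | deriv (fun t : ℝ =>
        Real.log (∫ ω, Real.exp (t * U ω)) - Real.log (∫ ω, Real.exp (t * V ω))) x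
          = 0}.Subsingleton ∧
    (∀ x : ℝ, deriv (fun t : ℝ =>
        Real.log (∫ ω, Real.exp (t * U ω)) - Real.log (∫ ω, Real.exp (t * V ω))) x = 0 →
      0 < deriv (deriv (fun t : ℝ =>
        Real.log (∫ ω, Real.exp (t * U ω)) - Real.log (∫ ω, Real.exp (t * V ω)))) x) := by
  show {x | deriv (cgf U ℙ - cgf V ℙ) x = 0}.Subsingleton ∧
    ∀ x, deriv (cgf U ℙ - cgf V ℙ) x = 0 → 0 < deriv (deriv (cgf U ℙ - cgf V ℙ)) x
  have htU : ∀ t, t ∈ interior (integrableExpSet U ℙ) := by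
    simp [interior_integrableExpSet_eq_univ hUmeas.aemeasurable (hU.mono fun _ h => h.1)]
  have htV : ∀ t, t ∈ interior (integrableExpSet V ℙ) := by
    simp [interior_integrableExpSet_eq_univ hVmeas.aemeasurable hV]
  have hanU t := analyticAt_cgf (htU t)
  have hanV t := analyticAt_cgf (htV t)
  have hψ' : deriv (cgf U ℙ - cgf V ℙ) = deriv (cgf U ℙ) - deriv (cgf V ℙ) :=
    funext fun t => deriv_sub (hanU t).differentiableAt (hanV t).differentiableAt
  have key t (ht : deriv (cgf U ℙ - cgf V ℙ) t = 0) :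
      0 < deriv (deriv (cgf U ℙ - cgf V ℙ)) t := by
    rw [hψ', Pi.sub_apply, sub_eq_zero] at ht
    rw [hψ', deriv_sub (hanU t).deriv.differentiableAt (hanV t).deriv.differentiableAt, sub_pos]
    simpa only [iteratedDeriv_succ, iteratedDeriv_zero] using
      iteratedDeriv_two_cgf_lt_of_deriv_cgf_eq hab.le (hU.mono fun _ h => h.2) hV
        (htU t) (htV t) ht
  refine ⟨subsingleton_setOf_eq_zero_of_deriv_pos ?_ key, key⟩
  rw [hψ']
  exact continuous_iff_continuousAt.2 fun t =>
    (hanU t).deriv.continuousAt.sub (hanV t).deriv.continuousAt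

/-- Let `U` be supported on `[−K,a) ∪ (b,K]` and `V` on `[a,b]`. Then
`ψ(x) = log E[e^{xU}] − log E[e^{xV}]` has a derivative with at most one root, and at
any critical point the second derivative is strictly positive (so `ψ` is either
monotone or has a unique critical point which is a strict local minimum). -/
theorem stmt_16 {Ω : Type*} [MeasureSpace Ω] [IsProbabilityMeasure (ℙ : Measure Ω)]
    (K a b : ℝ) (hKa : -K ≤ a) (hab : a < b) (hbK : b ≤ K)
    (U V : Ω → ℝ) (hUmeas : Measurable U) (hVmeas : Measurable V)
    (hU : ∀ᵐ ω ∂(ℙ : Measure Ω),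
      U ω ∈ Set.Icc (-K) K ∧ (U ω < a ∨ b < U ω))
    (hV : ∀ᵐ ω ∂(ℙ : Measure Ω), V ω ∈ Set.Icc a b) :
    {x : ℝ | deriv (fun t : ℝ =>
        Real.log (∫ ω, Real.exp (t * U ω)) - Real.log (∫ ω, Real.exp (t * V ω))) x
          = 0}.Subsingleton ∧
    (∀ x : ℝ, deriv (fun t : ℝ =>
        Real.log (∫ ω, Real.exp (t * U ω)) - Real.log (∫ ω, Real.exp (t * V ω))) x = 0 →
      0 < deriv (deriv (fun t : ℝ =>
        Real.log (∫ ω, Real.exp (t * U ω)) - Real.log (∫ ω, Real.exp (t * V ω)))) x) :=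
  stmt_16_general K a b hab U V hUmeas hVmeas hU hV
end
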